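/- arXiv:math/0601685 — 2 statements merged into one kernel-verified Lean document; each statement's English description precedes it below -/
import Mathlib

section
/- Let k be a number field, S a finite set of places containing the archimedean places, and let f, g ∈ O_k[t] be polynomials with no common zero, and f̃, g̃ ∈ k[t] with f·g̃ + g·f̃ = h for some h ∈ O_k[t]. Then there exists a nonzero constant c ∈ k^* such that for every solution (t, u, v) ∈ O_{k,S} × O_{k,S}^* × O_{k,S}^* of f(t)u + g(t)v = h(t) with f(t)g(t) ≠ 0, we have c·(f̃(t) − v)/f(t) ∈ O_{k,S} and c·(u − g̃(t))/g(t) ∈ O_{k,S}. -/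
/-!
From `f(t)u + g(t)v = h(t) = f(t)g̃(t) + g(t)f̃(t)` we get `f(t)(u - g̃(t)) = g(t)(f̃(t) - v)`, so
both quotients equal one `x ∈ k` with `f(t)x` and `g(t)x` in `O_{k,S}` up to the denominators of
`f̃, g̃`. As `f` and `g` are coprime in `k[t]`, a Bézout relation `p₀f + q₀g = 1` gives
`x = p₀(t)·f(t)x + q₀(t)·g(t)x`, which is an `S`-integer once the denominators of `p₀, q₀` are
cleared as well.
-/

open Polynomial IsDedekindDomain NumberField

namespace Polynomial

theorem eval_mem_of_mem_lifts {R K : Type*} [CommSemiring R] [CommSemiring K] [Algebra R K]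
    (A : Subalgebra R K) {p : K[X]} (hp : p ∈ lifts (algebraMap R K)) {t : K} (ht : t ∈ A) :
    p.eval t ∈ A := by
  obtain ⟨q, rfl⟩ := (mem_lifts p).mp hp
  rw [eval_map_algebraMap, ← aeval_subalgebra_coe q A ⟨t, ht⟩]
  exact SetLike.coe_mem _

section Localization

variable {R K : Type*} [CommRing R] [CommRing K] [Algebra R K] (M : Submonoid R)
  [IsLocalization M K]

theorem exists_mem_smul_mem_lifts (p : K[X]) : ∃ b ∈ M, b • p ∈ lifts (algebraMap R K) := by
  obtain ⟨b, hbM, hb⟩ := IsLocalization.integerNormalization_spec M p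
  exact ⟨b, hbM, (mem_lifts _).mpr ⟨_, hb⟩⟩

theorem exists_mem_smul_mem_lifts₂ (p q : K[X]) :
    ∃ b ∈ M, b • p ∈ lifts (algebraMap R K) ∧ b • q ∈ lifts (algebraMap R K) := by
  obtain ⟨b, hbM, hb⟩ := exists_mem_smul_mem_lifts M p
  obtain ⟨b', hb'M, hb'⟩ := exists_mem_smul_mem_lifts M q
  refine ⟨b' * b, M.mul_mem hb'M hbM, ?_, ?_⟩
  · rw [mul_smul]
    exact smul_mem_lifts b' hb
  · rw [mul_comm, mul_smul]
    exact smul_mem_lifts b hb'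

theorem exists_mem_smul_mem_of_isCoprime (A : Subalgebra R K) {f g : K[X]}
    (hfg : IsCoprime f g) :
    ∃ c ∈ M, ∀ t ∈ A, ∀ x : K, f.eval t * x ∈ A → g.eval t * x ∈ A → c • x ∈ A := by
  obtain ⟨p, q, hpq⟩ := hfg
  obtain ⟨c, hcM, hp, hq⟩ := exists_mem_smul_mem_lifts₂ M p q
  refine ⟨c, hcM, fun t ht x hfx hgx => ?_⟩
  have hx : c • x = (c • p).eval t * (f.eval t * x) + (c • q).eval t * (g.eval t * x) := by
    have hpq_t := congrArg (eval t) hpq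
    simp only [eval_add, eval_mul, eval_one] at hpq_t
    rw [eval_smul, eval_smul]
    simp only [Algebra.smul_def]
    linear_combination (-(algebraMap R K c * x)) * hpq_t
  rw [hx]
  exact add_mem (mul_mem (eval_mem_of_mem_lifts A hp ht) hfx)
    (mul_mem (eval_mem_of_mem_lifts A hq ht) hgx)

end Localization

end Polynomial

theorem Set.coe_mem_integer_of_mem_unit {R K : Type*} [CommRing R] [IsDedekindDomain R] [Field K]
    [Algebra R K] [IsFractionRing R K] {S : Set (HeightOneSpectrum R)} {u : Kˣ}
    (hu : u ∈ S.unit K) : (u : K) ∈ S.integer K :=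
  fun v hv => (hu v hv).le

theorem stmt_5_general {k : Type*} [Field k] [NumberField k]
    (S : Finset (HeightOneSpectrum (𝓞 k)))
    (f g h ftil gtil : k[X])
    (hnocommon : ∀ z : AlgebraicClosure k, ¬(aeval z f = 0 ∧ aeval z g = 0))
    (hbezout : f * gtil + g * ftil = h) :
    ∃ c : k, c ≠ 0 ∧ ∀ t : k, ∀ u v : kˣ,
      t ∈ (S : Set (HeightOneSpectrum (𝓞 k))).integer k →
      u ∈ (S : Set (HeightOneSpectrum (𝓞 k))).unit k →
      v ∈ (S : Set (HeightOneSpectrum (𝓞 k))).unit k →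
      f.eval t * u + g.eval t * v = h.eval t →
      f.eval t * g.eval t ≠ 0 →
      c * (ftil.eval t - v) / f.eval t ∈ (S : Set (HeightOneSpectrum (𝓞 k))).integer k ∧
      c * ((u : k) - gtil.eval t) / g.eval t ∈ (S : Set (HeightOneSpectrum (𝓞 k))).integer k := by
  set A := (S : Set (HeightOneSpectrum (𝓞 k))).integer k
  have hfg : IsCoprime f g := (isCoprime_iff_aeval_ne_zero_of_isAlgClosed k (AlgebraicClosure k)
    f g).mpr fun z => not_and_or.mp (hnocommon z)
  obtain ⟨c, hc, hcA⟩ := exists_mem_smul_mem_of_isCoprime (nonZeroDivisors (𝓞 k)) A hfg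
  obtain ⟨d, hd, hdf, hdg⟩ := exists_mem_smul_mem_lifts₂ (nonZeroDivisors (𝓞 k)) ftil gtil
  refine ⟨algebraMap (𝓞 k) k (c * d),
    IsFractionRing.to_map_ne_zero_of_mem_nonZeroDivisors (mul_mem hc hd), ?_⟩
  intro t u v ht hu hv heq hfg0
  obtain ⟨hf0, hg0⟩ := mul_ne_zero_iff.mp hfg0
  set x := (ftil.eval t - v) / f.eval t
  have hfx : f.eval t * x = ftil.eval t - v := mul_div_cancel₀ _ hf0
  have hgx : g.eval t * x = u - gtil.eval t := by
    rw [← hbezout, eval_add, eval_mul, eval_mul] at heq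
    rw [← mul_right_inj' hf0, mul_left_comm, hfx]
    linear_combination -heq
  have hcdx : c • d • x ∈ A := hcA t ht (d • x)
    (by rw [mul_smul_comm, hfx, smul_sub, ← eval_smul]
        exact sub_mem (eval_mem_of_mem_lifts A hdf ht)
          (A.smul_mem (Set.coe_mem_integer_of_mem_unit hv) d))
    (by rw [mul_smul_comm, hgx, smul_sub, ← eval_smul]
        exact sub_mem (A.smul_mem (Set.coe_mem_integer_of_mem_unit hu) d)
          (eval_mem_of_mem_lifts A hdg ht))
  have hxf : (ftil.eval t - v) / f.eval t = x := rfl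
  have hxg : (u - gtil.eval t) / g.eval t = x := by rw [← hgx, mul_div_cancel_left₀ _ hg0]
  have hx : algebraMap (𝓞 k) k (c * d) * x = c • d • x := by
    rw [smul_smul, Algebra.smul_def]
  rw [mul_div_assoc, mul_div_assoc, hxf, hxg, hx]
  exact ⟨hcdx, hcdx⟩

/-- For `f, g ∈ O_k[t]` with no common zero and `f̃, g̃ ∈ k[t]` with
`f·g̃ + g·f̃ = h` for some `h ∈ O_k[t]`, there is a nonzero `c ∈ k^*` such that for every
solution `(t, u, v) ∈ O_{k,S} × O_{k,S}^* × O_{k,S}^*` of `f(t)u + g(t)v = h(t)` with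
`f(t)g(t) ≠ 0`, both `c(f̃(t) − v)/f(t)` and `c(u − g̃(t))/g(t)` are `S`-integers. -/
theorem stmt_5 {k : Type*} [Field k] [NumberField k]
    (S : Finset (HeightOneSpectrum (𝓞 k)))
    (f g h ftil gtil : k[X])
    (hfint : ∀ i, f.coeff i ∈ (algebraMap (𝓞 k) k).range)
    (hgint : ∀ i, g.coeff i ∈ (algebraMap (𝓞 k) k).range)
    (hhint : ∀ i, h.coeff i ∈ (algebraMap (𝓞 k) k).range)
    (hnocommon : ∀ z : AlgebraicClosure k, ¬(aeval z f = 0 ∧ aeval z g = 0))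
    (hbezout : f * gtil + g * ftil = h) :
    ∃ c : k, c ≠ 0 ∧ ∀ t : k, ∀ u v : kˣ,
      t ∈ (S : Set (HeightOneSpectrum (𝓞 k))).integer k →
      u ∈ (S : Set (HeightOneSpectrum (𝓞 k))).unit k →
      v ∈ (S : Set (HeightOneSpectrum (𝓞 k))).unit k →
      f.eval t * u + g.eval t * v = h.eval t →
      f.eval t * g.eval t ≠ 0 →
      c * (ftil.eval t - v) / f.eval t ∈ (S : Set (HeightOneSpectrum (𝓞 k))).integer k ∧
      c * ((u : k) - gtil.eval t) / g.eval t ∈ (S : Set (HeightOneSpectrum (𝓞 k))).integer k :=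
  stmt_5_general S f g h ftil gtil hnocommon hbezout
end

section
/- Let Z₁, Z₂, Z₃, Z₄ be curves on P¹ × P¹ of types (0,1), (1,0), (1,m), (1,n) respectively, with m, n ≥ 1. If the four curves are in general position (no three have a common point), then every irreducible curve C on P¹ × P¹ not contained in Z₁ ∪ Z₂ ∪ Z₃ ∪ Z₄ intersects Z₁ ∪ Z₂ ∪ Z₃ ∪ Z₄ in at least two distinct points. -/
open MvPolynomial

/-- A polynomial in the variables `(x₁, y₁) = (Sum.inl 0, Sum.inl 1)` and
`(x₂, y₂) = (Sum.inr 0, Sum.inr 1)` is bihomogeneous of bidegree `(a, b)` if every monomial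
has total degree `a` in `(x₁, y₁)` and `b` in `(x₂, y₂)`. -/
def IsBihomogeneous {K : Type*} [CommRing K]
    (F : MvPolynomial (Fin 2 ⊕ Fin 2) K) (a b : ℕ) : Prop :=
  ∀ m ∈ F.support,
    m (Sum.inl 0) + m (Sum.inl 1) = a ∧ m (Sum.inr 0) + m (Sum.inr 1) = b

lemma bihom_scale {K : Type*} [CommRing K] {F : MvPolynomial (Fin 2 ⊕ Fin 2) K} {a b : ℕ}
    (hF : IsBihomogeneous F a b) (c d : K) (p q : Fin 2 → K) :
    eval (Sum.elim (c • p) (d • q)) F = c ^ a * d ^ b * eval (Sum.elim p q) F := by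
  rw [eval_eq', eval_eq', Finset.mul_sum]
  refine Finset.sum_congr rfl fun m hm => ?_
  obtain ⟨ha, hb⟩ := hF m hm
  rw [Fintype.prod_sum_type, Fintype.prod_sum_type]
  simp only [Sum.elim_inl, Sum.elim_inr, Pi.smul_apply, smul_eq_mul]
  rw [Fin.prod_univ_two, Fin.prod_univ_two, Fin.prod_univ_two, Fin.prod_univ_two,
    mul_pow, mul_pow, mul_pow, mul_pow, ← ha, ← hb]
  ring

lemma bihom_linear_p {K : Type*} [CommRing K] {G : MvPolynomial (Fin 2 ⊕ Fin 2) K} {d : ℕ}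
    (hG : IsBihomogeneous G 1 d) (p q : Fin 2 → K) :
    eval (Sum.elim p q) G =
      p 0 * eval (Sum.elim ![1, 0] q) G + p 1 * eval (Sum.elim ![0, 1] q) G := by
  rw [eval_eq', eval_eq', eval_eq', Finset.mul_sum, Finset.mul_sum, ← Finset.sum_add_distrib]
  refine Finset.sum_congr rfl fun m hm => ?_
  obtain ⟨ha, _⟩ := hG m hm
  rw [Fintype.prod_sum_type, Fintype.prod_sum_type, Fintype.prod_sum_type]
  simp only [Sum.elim_inl, Sum.elim_inr]
  rw [Fin.prod_univ_two, Fin.prod_univ_two, Fin.prod_univ_two]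
  rcases Nat.add_eq_one_iff.mp ha with ⟨h0, h1⟩ | ⟨h0, h1⟩ <;>
    simp [h0, h1] <;> ring

lemma bihom_linear_q {K : Type*} [CommRing K] {G : MvPolynomial (Fin 2 ⊕ Fin 2) K} {c : ℕ}
    (hG : IsBihomogeneous G c 1) (p q : Fin 2 → K) :
    eval (Sum.elim p q) G =
      q 0 * eval (Sum.elim p ![1, 0]) G + q 1 * eval (Sum.elim p ![0, 1]) G := by
  rw [eval_eq', eval_eq', eval_eq', Finset.mul_sum, Finset.mul_sum, ← Finset.sum_add_distrib]
  refine Finset.sum_congr rfl fun m hm => ?_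
  obtain ⟨_, hb⟩ := hG m hm
  rw [Fintype.prod_sum_type, Fintype.prod_sum_type, Fintype.prod_sum_type]
  simp only [Sum.elim_inl, Sum.elim_inr]
  rw [Fin.prod_univ_two, Fin.prod_univ_two, Fin.prod_univ_two]
  rcases Nat.add_eq_one_iff.mp hb with ⟨h0, h1⟩ | ⟨h0, h1⟩ <;>
    simp [h0, h1] <;> ring

lemma polyeval_eval₂ {K : Type*} [CommSemiring K] (u : Fin 2 → Polynomial K) (t : K)
    (f : MvPolynomial (Fin 2) K) :
    Polynomial.eval t (eval₂ Polynomial.C u f) = eval (fun i => Polynomial.eval t (u i)) f := by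
  have h := eval₂_comp_left (Polynomial.evalRingHom t) Polynomial.C u f
  have h2 : (Polynomial.evalRingHom t).comp Polynomial.C = RingHom.id K := by
    ext x; simp
  simp only [Polynomial.coe_evalRingHom] at h
  rw [h2] at h
  rw [h, eval₂_id]
  rfl

lemma root_of_hom {K : Type*} [Field K] [IsAlgClosed K] (f : MvPolynomial (Fin 2) K) (e : ℕ)
    (he : 1 ≤ e) (hf : ∀ (c : K) (v : Fin 2 → K), eval (c • v) f = c ^ e * eval v f) :
    ∃ v : Fin 2 → K, v ≠ 0 ∧ eval v f = 0 := by
  set g : Polynomial K := eval₂ Polynomial.C ![Polynomial.X, 1] f with hgdef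
  have hgt : ∀ t : K, Polynomial.eval t g = eval ![t, 1] f := by
    intro t
    rw [hgdef, polyeval_eval₂]
    have : (fun i => Polynomial.eval t (![Polynomial.X, 1] i)) = ![t, 1] := by
      funext i; fin_cases i <;> simp
    rw [this]
  by_cases hdeg : g.degree = 0
  · have hgc : g = Polynomial.C (g.coeff 0) := Polynomial.eq_C_of_degree_le_zero (le_of_eq hdeg)
    set c := g.coeff 0 with hc
    have hcv : ∀ t : K, eval ![t, 1] f = c := by
      intro t; rw [← hgt t, hgc]; simp
    by_cases hc0 : c = 0
    · refine ⟨![0, 1], ?_, ?_⟩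
      · intro h; have := congrFun h 1; simp at this
      · rw [← hgt 0]; rw [hgc]; simp [hc0]
    · -- show eval ![1,0] f = 0
      set h : Polynomial K := eval₂ Polynomial.C ![1, Polynomial.X] f with hhdef
      have hht : ∀ t : K, Polynomial.eval t h = eval ![1, t] f := by
        intro t
        rw [hhdef, polyeval_eval₂]
        have : (fun i => Polynomial.eval t (![1, Polynomial.X] i)) = ![1, t] := by
          funext i; fin_cases i <;> simp
        rw [this]
      have hval : ∀ u : K, u ≠ 0 → (h - Polynomial.C c * Polynomial.X ^ e).eval u = 0 := by
        intro u hu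
        have h1 : (u • ![u⁻¹, (1 : K)]) = ![1, u] := by
          funext i; fin_cases i <;> simp [hu, mul_inv_cancel₀]
        have h2 := hf u ![u⁻¹, 1]
        rw [h1, hcv u⁻¹] at h2
        simp [hht u, h2]; ring
      have hzero : h - Polynomial.C c * Polynomial.X ^ e = 0 := by
        apply Polynomial.eq_zero_of_infinite_isRoot
        exact ((Set.finite_singleton (0:K)).infinite_compl).mono (fun u hu => hval u hu)
      refine ⟨![1, 0], ?_, ?_⟩
      · intro hcon; have := congrFun hcon 0; simp at this
      · have hh : h = Polynomial.C c * Polynomial.X ^ e := by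
          rw [← sub_eq_zero]; exact hzero
        have := hht 0
        rw [hh] at this
        rw [← this]
        simp [zero_pow (show e ≠ 0 by omega)]
  · obtain ⟨t, ht⟩ := IsAlgClosed.exists_root g hdeg
    refine ⟨![t, 1], ?_, ?_⟩
    · intro h; have := congrFun h 1; simp at this
    · rw [← hgt]; exact ht

-- helper: eval of substitution
lemma eval_subst {K : Type*} [CommSemiring K] (u : (Fin 2 ⊕ Fin 2) → MvPolynomial (Fin 2) K)
    (x : Fin 2 → K) (F : MvPolynomial (Fin 2 ⊕ Fin 2) K) :
    eval x (eval₂ C u F) = eval (fun v => eval x (u v)) F := by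
  rw [← eval_assoc]; rfl

lemma fiber_subst_eval {K : Type*} [CommSemiring K] (q : Fin 2 → K) (p : Fin 2 → K)
    (F : MvPolynomial (Fin 2 ⊕ Fin 2) K) :
    eval p (eval₂ C (Sum.elim X (fun i => C (q i))) F) = eval (Sum.elim p q) F := by
  rw [eval_subst]
  have hfun : (fun v => eval p (Sum.elim X (fun i => C (q i)) v)) = Sum.elim p q := by
    funext v
    cases v with
    | inl i => simp
    | inr i => simp
  rw [hfun]

lemma meet_p {K : Type*} [Field K] [IsAlgClosed K] {H G : MvPolynomial (Fin 2 ⊕ Fin 2) K}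
    {a b d : ℕ} (hH : IsBihomogeneous H a b) (hG : IsBihomogeneous G 1 d)
    (hpos : 1 ≤ a * d + b) :
    ∃ p q : Fin 2 → K, p ≠ 0 ∧ q ≠ 0 ∧
      eval (Sum.elim p q) H = 0 ∧ eval (Sum.elim p q) G = 0 := by
  classical
  -- A, B : coefficient polynomials of G in the p-variables
  set uA : (Fin 2 ⊕ Fin 2) → MvPolynomial (Fin 2) K :=
    Sum.elim (fun i => C ((![1, 0] : Fin 2 → K) i)) X with huA
  set uB : (Fin 2 ⊕ Fin 2) → MvPolynomial (Fin 2) K :=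
    Sum.elim (fun i => C ((![0, 1] : Fin 2 → K) i)) X with huB
  set A : MvPolynomial (Fin 2) K := eval₂ C uA G with hA
  set B : MvPolynomial (Fin 2) K := eval₂ C uB G with hB
  have hAe : ∀ x : Fin 2 → K, eval x A = eval (Sum.elim ![1, 0] x) G := by
    intro x
    rw [hA, eval_subst]
    have hfun : (fun v => eval x (uA v)) = Sum.elim ![1, 0] x := by
      funext v
      cases v with
      | inl i => simp [huA]
      | inr i => simp [huA]
    rw [hfun]
  have hBe : ∀ x : Fin 2 → K, eval x B = eval (Sum.elim ![0, 1] x) G := by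
    intro x
    rw [hB, eval_subst]
    have hfun : (fun v => eval x (uB v)) = Sum.elim ![0, 1] x := by
      funext v
      cases v with
      | inl i => simp [huB]
      | inr i => simp [huB]
    rw [hfun]
  -- the resultant-like polynomial R
  set R : MvPolynomial (Fin 2) K :=
    eval₂ C (Sum.elim (![-B, A] : Fin 2 → MvPolynomial (Fin 2) K) X) H with hR
  have hRe : ∀ x : Fin 2 → K,
      eval x R = eval (Sum.elim ![-(eval x B), eval x A] x) H := by
    intro x
    rw [hR, eval_subst]
    have hfun : (fun v => eval x (Sum.elim (![-B, A] : Fin 2 → MvPolynomial (Fin 2) K) X v))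
        = Sum.elim ![-(eval x B), eval x A] x := by
      funext v
      cases v with
      | inl i => fin_cases i <;> simp
      | inr i => simp
    rw [hfun]
  -- functional homogeneity of R
  have hRhom : ∀ (c : K) (x : Fin 2 → K), eval (c • x) R = c ^ (a * d + b) * eval x R := by
    intro c x
    rw [hRe, hRe]
    have hAc : eval (c • x) A = c ^ d * eval x A := by
      rw [hAe, hAe]
      have := bihom_scale hG (1 : K) c ![1, 0] x
      simpa using this
    have hBc : eval (c • x) B = c ^ d * eval x B := by
      rw [hBe, hBe]
      have := bihom_scale hG (1 : K) c ![0, 1] x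
      simpa using this
    have hvec : (![-(eval (c • x) B), eval (c • x) A] : Fin 2 → K)
        = (c ^ d) • ![-(eval x B), eval x A] := by
      funext i
      fin_cases i <;> simp [hAc, hBc] <;> ring
    rw [hvec]
    have := bihom_scale hH (c ^ d) c ![-(eval x B), eval x A] x
    rw [this, ← pow_mul, mul_comm d a, ← pow_add]
  obtain ⟨q₀, hq₀, hq₀R⟩ := root_of_hom R (a * d + b) hpos hRhom
  set Aq := eval q₀ A with hAq
  set Bq := eval q₀ B with hBq
  have hHP : eval (Sum.elim ![-Bq, Aq] q₀) H = 0 := by rw [← hRe]; exact hq₀R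
  by_cases hAB : Aq = 0 ∧ Bq = 0
  · -- whole fiber over q₀ lies in G
    have hGfib : ∀ p : Fin 2 → K, eval (Sum.elim p q₀) G = 0 := by
      intro p
      rw [bihom_linear_p hG, ← hAe, ← hBe, ← hAq, ← hBq, hAB.1, hAB.2]
      ring
    by_cases ha : a = 0
    · refine ⟨![1, 0], q₀, ?_, hq₀, ?_, hGfib _⟩
      · intro hcon; have := congrFun hcon 0; simp at this
      · have hsc := bihom_scale hH (0 : K) 1 ![1, 0] q₀
        rw [ha] at hsc
        simp only [pow_zero, one_pow, one_mul, one_smul] at hsc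
        have h0 : ((0 : K) • ![(1 : K), 0]) = ![-Bq, Aq] := by
          funext i; fin_cases i <;> simp [hAB.1, hAB.2]
        rw [h0, hHP] at hsc
        exact hsc.symm
    · -- a ≥ 1 : find a root of H(·, q₀)
      set f : MvPolynomial (Fin 2) K := eval₂ C (Sum.elim X (fun i => C (q₀ i))) H with hf
      have hfe : ∀ p : Fin 2 → K, eval p f = eval (Sum.elim p q₀) H :=
        fun p => fiber_subst_eval q₀ p H
      have hfhom : ∀ (c : K) (p : Fin 2 → K), eval (c • p) f = c ^ a * eval p f := by
        intro c p
        rw [hfe, hfe]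
        have := bihom_scale hH c (1 : K) p q₀
        simpa using this
      obtain ⟨p₁, hp₁, hp₁f⟩ := root_of_hom f a (by omega) hfhom
      exact ⟨p₁, q₀, hp₁, hq₀, by rw [← hfe]; exact hp₁f, hGfib _⟩
  · -- the vector (-Bq, Aq) is a nonzero point
    refine ⟨![-Bq, Aq], q₀, ?_, hq₀, hHP, ?_⟩
    · intro hcon
      apply hAB
      constructor
      · have := congrFun hcon 1; simpa using this
      · have := congrFun hcon 0; simpa [neg_eq_zero] using this
    · rw [bihom_linear_p hG, ← hAe, ← hBe, ← hAq, ← hBq]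
      simp
      ring

lemma meet_z0 {K : Type*} [Field K] [IsAlgClosed K] {H G : MvPolynomial (Fin 2 ⊕ Fin 2) K}
    {a b : ℕ} (hH : IsBihomogeneous H a b) (hG : IsBihomogeneous G 0 1) (hGne : G ≠ 0)
    (ha : 1 ≤ a) :
    ∃ p q : Fin 2 → K, p ≠ 0 ∧ q ≠ 0 ∧
      eval (Sum.elim p q) H = 0 ∧ eval (Sum.elim p q) G = 0 := by
  classical
  -- G is independent of p
  have hGp : ∀ (p p' : Fin 2 → K) (q : Fin 2 → K),
      eval (Sum.elim p q) G = eval (Sum.elim p' q) G := by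
    intro p p' q
    have h1 := bihom_scale hG (0 : K) 1 p q
    have h2 := bihom_scale hG (0 : K) 1 p' q
    simp only [pow_zero, one_pow, one_mul, one_smul, zero_smul] at h1 h2
    rw [← h1, ← h2]
  set k0 : K := eval (Sum.elim (0 : Fin 2 → K) ![1, 0]) G with hk0
  set k1 : K := eval (Sum.elim (0 : Fin 2 → K) ![0, 1]) G with hk1
  have hGlin : ∀ (p q : Fin 2 → K), eval (Sum.elim p q) G = q 0 * k0 + q 1 * k1 := by
    intro p q
    rw [bihom_linear_q hG, hGp p 0 ![1, 0], hGp p 0 ![0, 1]]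
  by_cases hk : k0 = 0 ∧ k1 = 0
  · exfalso
    apply hGne
    apply MvPolynomial.funext
    intro x
    have : x = Sum.elim (x ∘ Sum.inl) (x ∘ Sum.inr) := (Sum.elim_comp_inl_inr x).symm
    rw [this, hGlin, hk.1, hk.2]
    simp
  · set qs : Fin 2 → K := ![-k1, k0] with hqs
    have hqs0 : qs ≠ 0 := by
      intro hcon
      apply hk
      constructor
      · have := congrFun hcon 1; simpa [hqs] using this
      · have := congrFun hcon 0; simpa [hqs, neg_eq_zero] using this
    have hGzero : ∀ p : Fin 2 → K, eval (Sum.elim p qs) G = 0 := by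
      intro p
      rw [hGlin]
      simp [hqs]
      ring
    set f : MvPolynomial (Fin 2) K := eval₂ C (Sum.elim X (fun i => C (qs i))) H with hf
    have hfe : ∀ p : Fin 2 → K, eval p f = eval (Sum.elim p qs) H :=
      fun p => fiber_subst_eval qs p H
    have hfhom : ∀ (c : K) (p : Fin 2 → K), eval (c • p) f = c ^ a * eval p f := by
      intro c p
      rw [hfe, hfe]
      have := bihom_scale hH c (1 : K) p qs
      simpa using this
    obtain ⟨p₁, hp₁, hp₁f⟩ := root_of_hom f a ha hfhom
    exact ⟨p₁, qs, hp₁, hqs0, by rw [← hfe]; exact hp₁f, hGzero _⟩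

lemma bihom_pos {K : Type*} [Field K] {H : MvPolynomial (Fin 2 ⊕ Fin 2) K} {a b : ℕ}
    (hH : IsBihomogeneous H a b) (hirr : Irreducible H) : 1 ≤ a + b := by
  by_contra hcon
  have ha : a = 0 := by omega
  have hb : b = 0 := by omega
  apply hirr.not_isUnit
  have hC : H = C (coeff 0 H) := by
    apply MvPolynomial.ext
    intro v
    rw [coeff_C]
    by_cases hv : v = 0
    · subst hv; simp
    · rw [if_neg (Ne.symm hv)]
      by_contra hne
      have hmem : v ∈ H.support := by
        rw [mem_support_iff]; exact hne
      obtain ⟨h1, h2⟩ := hH v hmem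
      apply hv
      ext w
      cases w with
      | inl i => fin_cases i <;> simp <;> omega
      | inr i => fin_cases i <;> simp <;> omega
  rw [hC]
  apply IsUnit.map
  apply isUnit_iff_ne_zero.mpr
  intro h0
  apply hirr.ne_zero
  rw [hC, h0, map_zero]

lemma transfer {K : Type*} [Field K] {F : MvPolynomial (Fin 2 ⊕ Fin 2) K} {α β : ℕ}
    (hF : IsBihomogeneous F α β) {p q p' q' : Fin 2 → K}
    (c₁ c₂ : Kˣ) (h1 : (c₁ : K) • p = p') (h2 : (c₂ : K) • q = q')
    (hz : eval (Sum.elim p' q') F = 0) : eval (Sum.elim p q) F = 0 := by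
  subst h1 h2
  rw [bihom_scale hF] at hz
  rcases mul_eq_zero.mp hz with h | h
  · rcases mul_eq_zero.mp h with h' | h'
    · exact absurd h' (pow_ne_zero _ c₁.ne_zero)
    · exact absurd h' (pow_ne_zero _ c₂.ne_zero)
  · exact h

lemma finish_two_points {K : Type*} [Field K]
    (Z : Fin 4 → MvPolynomial (Fin 2 ⊕ Fin 2) K)
    (hgen : ∀ i j l : Fin 4, i ≠ j → i ≠ l → j ≠ l →
      ∀ p q : Fin 2 → K, p ≠ 0 → q ≠ 0 →
        ¬(eval (Sum.elim p q) (Z i) = 0 ∧ eval (Sum.elim p q) (Z j) = 0 ∧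
          eval (Sum.elim p q) (Z l) = 0))
    (i j l : Fin 4) (hij : i ≠ j) (hil : i ≠ l) (hjl : j ≠ l)
    {αj βj αl βl : ℕ} (hbj : IsBihomogeneous (Z j) αj βj) (hbl : IsBihomogeneous (Z l) αl βl)
    (H : MvPolynomial (Fin 2 ⊕ Fin 2) K)
    (p1 q1 p2 q2 p3 q3 : Fin 2 → K) (hp1 : p1 ≠ 0) (hq1 : q1 ≠ 0) (hp2 : p2 ≠ 0)
    (hq2 : q2 ≠ 0) (hp3 : p3 ≠ 0) (hq3 : q3 ≠ 0)
    (hH1 : eval (Sum.elim p1 q1) H = 0) (hH2 : eval (Sum.elim p2 q2) H = 0)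
    (hH3 : eval (Sum.elim p3 q3) H = 0)
    (hZ1 : eval (Sum.elim p1 q1) (Z i) = 0) (hZ2 : eval (Sum.elim p2 q2) (Z j) = 0)
    (hZ3 : eval (Sum.elim p3 q3) (Z l) = 0) :
    ∃ p₁ q₁ p₂ q₂ : Fin 2 → K, p₁ ≠ 0 ∧ q₁ ≠ 0 ∧ p₂ ≠ 0 ∧ q₂ ≠ 0 ∧
      eval (Sum.elim p₁ q₁) H = 0 ∧ eval (Sum.elim p₂ q₂) H = 0 ∧
      eval (Sum.elim p₁ q₁) (Z 0 * Z 1 * Z 2 * Z 3) = 0 ∧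
      eval (Sum.elim p₂ q₂) (Z 0 * Z 1 * Z 2 * Z 3) = 0 ∧
      ¬(∃ c₁ c₂ : Kˣ, (c₁ : K) • p₁ = p₂ ∧ (c₂ : K) • q₁ = q₂) := by
  have hprod : ∀ (p q : Fin 2 → K) (k : Fin 4), eval (Sum.elim p q) (Z k) = 0 →
      eval (Sum.elim p q) (Z 0 * Z 1 * Z 2 * Z 3) = 0 := by
    intro p q k hk
    have hdvd : Z k ∣ Z 0 * Z 1 * Z 2 * Z 3 := by
      fin_cases k
      · exact ⟨Z 1 * Z 2 * Z 3, by
          show Z 0 * Z 1 * Z 2 * Z 3 = Z 0 * (Z 1 * Z 2 * Z 3); ring⟩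
      · exact ⟨Z 0 * Z 2 * Z 3, by
          show Z 0 * Z 1 * Z 2 * Z 3 = Z 1 * (Z 0 * Z 2 * Z 3); ring⟩
      · exact ⟨Z 0 * Z 1 * Z 3, by
          show Z 0 * Z 1 * Z 2 * Z 3 = Z 2 * (Z 0 * Z 1 * Z 3); ring⟩
      · exact ⟨Z 0 * Z 1 * Z 2, by
          show Z 0 * Z 1 * Z 2 * Z 3 = Z 3 * (Z 0 * Z 1 * Z 2); ring⟩
    obtain ⟨c, hc⟩ := hdvd
    rw [hc, map_mul, hk, zero_mul]
  by_cases h12 : ∃ c₁ c₂ : Kˣ, (c₁ : K) • p1 = p2 ∧ (c₂ : K) • q1 = q2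
  · by_cases h13 : ∃ c₁ c₂ : Kˣ, (c₁ : K) • p1 = p3 ∧ (c₂ : K) • q1 = q3
    · exfalso
      obtain ⟨c1, c2, e1, e2⟩ := h12
      obtain ⟨d1, d2, f1, f2⟩ := h13
      exact hgen i j l hij hil hjl p1 q1 hp1 hq1
        ⟨hZ1, transfer hbj c1 c2 e1 e2 hZ2, transfer hbl d1 d2 f1 f2 hZ3⟩
    · exact ⟨p1, q1, p3, q3, hp1, hq1, hp3, hq3, hH1, hH3,
        hprod _ _ i hZ1, hprod _ _ l hZ3, h13⟩
  · exact ⟨p1, q1, p2, q2, hp1, hq1, hp2, hq2, hH1, hH2,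
      hprod _ _ i hZ1, hprod _ _ j hZ2, h12⟩

/-- Let `Z₁, Z₂, Z₃, Z₄ ⊂ P¹ × P¹` be curves of types `(0,1)`, `(1,0)`,
`(1,m)`, `(1,n)` with `m, n ≥ 1`, in general position (no three have a common point).
Then every irreducible curve `C = V(H)` not contained in `Z₁ ∪ Z₂ ∪ Z₃ ∪ Z₄` meets the
union in at least two distinct points.  Points of `P¹ × P¹` are represented by pairs of
nonzero vectors in `K²`; two representatives give the same point iff they differ by
scalars. -/
theorem stmt_16 {K : Type*} [Field K] [IsAlgClosed K]
    (Z : Fin 4 → MvPolynomial (Fin 2 ⊕ Fin 2) K) (m n : ℕ) (hm : 1 ≤ m) (hn : 1 ≤ n)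
    (hZ0 : ∀ i, Z i ≠ 0)
    (h1 : IsBihomogeneous (Z 0) 0 1) (h2 : IsBihomogeneous (Z 1) 1 0)
    (h3 : IsBihomogeneous (Z 2) 1 m) (h4 : IsBihomogeneous (Z 3) 1 n)
    (hgen : ∀ i j l : Fin 4, i ≠ j → i ≠ l → j ≠ l →
      ∀ p q : Fin 2 → K, p ≠ 0 → q ≠ 0 →
        ¬(eval (Sum.elim p q) (Z i) = 0 ∧ eval (Sum.elim p q) (Z j) = 0 ∧
          eval (Sum.elim p q) (Z l) = 0))
    (H : MvPolynomial (Fin 2 ⊕ Fin 2) K) (a b : ℕ) (hHbi : IsBihomogeneous H a b)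
    (hHirr : Irreducible H) (hHnotin : ∀ i, ¬ H ∣ Z i) :
    ∃ p₁ q₁ p₂ q₂ : Fin 2 → K, p₁ ≠ 0 ∧ q₁ ≠ 0 ∧ p₂ ≠ 0 ∧ q₂ ≠ 0 ∧
      eval (Sum.elim p₁ q₁) H = 0 ∧ eval (Sum.elim p₂ q₂) H = 0 ∧
      eval (Sum.elim p₁ q₁) (Z 0 * Z 1 * Z 2 * Z 3) = 0 ∧
      eval (Sum.elim p₂ q₂) (Z 0 * Z 1 * Z 2 * Z 3) = 0 ∧
      ¬(∃ c₁ c₂ : Kˣ, (c₁ : K) • p₁ = p₂ ∧ (c₂ : K) • q₁ = q₂) := by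
  have hab : 1 ≤ a + b := bihom_pos hHbi hHirr
  rcases Nat.eq_zero_or_pos b with hb | hb
  · -- b = 0, hence a ≥ 1 : use Z 0, Z 2, Z 3
    have ha : 1 ≤ a := by omega
    obtain ⟨p1, q1, hp1, hq1, hH1, hZ1⟩ := meet_z0 hHbi h1 (hZ0 0) ha
    obtain ⟨p2, q2, hp2, hq2, hH2, hZ2⟩ := meet_p hHbi h3
      (le_trans (Nat.one_le_iff_ne_zero.mpr (by positivity)) (Nat.le_add_right _ _))
    obtain ⟨p3, q3, hp3, hq3, hH3, hZ3⟩ := meet_p hHbi h4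
      (le_trans (Nat.one_le_iff_ne_zero.mpr (by positivity)) (Nat.le_add_right _ _))
    exact finish_two_points Z hgen 0 2 3 (by decide) (by decide) (by decide) h3 h4 H
      p1 q1 p2 q2 p3 q3 hp1 hq1 hp2 hq2 hp3 hq3 hH1 hH2 hH3 hZ1 hZ2 hZ3
  · -- b ≥ 1 : use Z 1, Z 2, Z 3
    obtain ⟨p1, q1, hp1, hq1, hH1, hZ1⟩ := meet_p hHbi h2 (by omega)
    obtain ⟨p2, q2, hp2, hq2, hH2, hZ2⟩ := meet_p hHbi h3 (by omega)
    obtain ⟨p3, q3, hp3, hq3, hH3, hZ3⟩ := meet_p hHbi h4 (by omega)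
    exact finish_two_points Z hgen 1 2 3 (by decide) (by decide) (by decide) h3 h4 H
      p1 q1 p2 q2 p3 q3 hp1 hq1 hp2 hq2 hp3 hq3 hH1 hH2 hH3 hZ1 hZ2 hZ3
end
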